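/- arXiv:2304.12444 — 6 statements merged into one kernel-verified Lean document; each statement's English description precedes it below -/
import Mathlib

section
/- If the sequence (a_n) satisfies c·a_{n+2} + b·a_{n+1} + a·a_n = 0 and P*_m(z) = ∑_{n=0}^m a_n z^{m-n}, then the generating function identity ∑_{m≥0} P*_m(z) t^m = (c·a_0 + (c·a_1 + b·a_0)t)/((c + bt + at²)(1 − tz)) holds as formal power series in t (with coefficients polynomials in z). -/
/-!
`∑ P*_m tᵐ` is the Cauchy product of `∑ aₙ tⁿ` with the geometric series `∑ zᵐ tᵐ = 1 / (1 - t z)`,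
and multiplying `∑ aₙ tⁿ` by `c + b t + a t²` kills every coefficient of degree `≥ 2` by the
recurrence, leaving `c a₀ + (c a₁ + b a₀) t`.
-/

open PowerSeries

namespace PowerSeries

variable {R : Type*} [CommRing R]

theorem mk_pow_mul_one_sub_C_mul_X (z : R) : mk (z ^ ·) * (1 - C z * X) = 1 := by
  simpa [rescale_mk, rescale_X] using congrArg (rescale z) (mk_one_mul_one_sub_eq_one (S := R))

theorem mk_sum_mul_pow_eq_mk_mul (s : ℕ → R) (z : R) :
    mk (fun m => ∑ n ∈ Finset.range (m + 1), s n * z ^ (m - n)) = mk s * mk (z ^ ·) := by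
  ext m
  rw [coeff_mk, coeff_mul, Finset.Nat.sum_antidiagonal_eq_sum_range_succ_mk]
  simp

theorem mk_sum_mul_pow_mul_one_sub_C_mul_X (s : ℕ → R) (z : R) :
    mk (fun m => ∑ n ∈ Finset.range (m + 1), s n * z ^ (m - n)) * (1 - C z * X) = mk s := by
  rw [mk_sum_mul_pow_eq_mk_mul, mul_assoc, mk_pow_mul_one_sub_C_mul_X, mul_one]

theorem mk_mul_quadratic_of_recurrence {a b c : R} {s : ℕ → R}
    (hs : ∀ n, c * s (n + 2) + b * s (n + 1) + a * s n = 0) :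
    mk s * (C c + C b * X + C a * X ^ 2) = C (c * s 0) + C (c * s 1 + b * s 0) * X := by
  rw [show mk s * (C c + C b * X + C a * X ^ 2)
      = C c * mk s + C b * (mk s * X) + C a * (mk s * X ^ 2) by ring]
  ext (_ | _ | n)
  · simp
  · simp [coeff_mul_X_pow']
  · simpa [coeff_mul_X_pow', coeff_succ_mul_X, coeff_X] using hs n

end PowerSeries

theorem reciprocal_polys_generating_function_general
    (a b c : ℝ) (aseq : ℕ → ℝ)
    (hrec : ∀ n : ℕ, c * aseq (n + 2) + b * aseq (n + 1) + a * aseq n = 0)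
    (Pstar : ℕ → Polynomial ℝ)
    (hP : ∀ m : ℕ, Pstar m
      = ∑ n ∈ Finset.range (m + 1), Polynomial.C (aseq n) * Polynomial.X ^ (m - n)) :
    PowerSeries.mk (fun m => Pstar m)
      * ((PowerSeries.C (R := Polynomial ℝ) (Polynomial.C c)
            + PowerSeries.C (R := Polynomial ℝ) (Polynomial.C b) * PowerSeries.X
            + PowerSeries.C (R := Polynomial ℝ) (Polynomial.C a) * PowerSeries.X ^ 2)
          * (1 - PowerSeries.C (R := Polynomial ℝ) Polynomial.X * PowerSeries.X))
      = PowerSeries.C (R := Polynomial ℝ) (Polynomial.C (c * aseq 0))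
        + PowerSeries.C (R := Polynomial ℝ) (Polynomial.C (c * aseq 1 + b * aseq 0))
            * PowerSeries.X := by
  have htelescope : mk (fun m => Pstar m) * (1 - C Polynomial.X * X) = mk (Polynomial.C ∘ aseq) := by
    simpa only [hP, Function.comp_apply] using
      mk_sum_mul_pow_mul_one_sub_C_mul_X (Polynomial.C ∘ aseq) Polynomial.X
  have hrecC : ∀ n, Polynomial.C c * (Polynomial.C ∘ aseq) (n + 2)
      + Polynomial.C b * (Polynomial.C ∘ aseq) (n + 1) + Polynomial.C a * (Polynomial.C ∘ aseq) n = 0 :=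
    fun n => by simp only [Function.comp_apply, ← Polynomial.C_mul, ← Polynomial.C_add, hrec n, map_zero]
  rw [mul_comm (_ + _), ← mul_assoc, htelescope, mk_mul_quadratic_of_recurrence hrecC]
  simp only [Function.comp_apply, map_add, map_mul]

theorem reciprocal_polys_generating_function
    (a b c : ℝ) (hc : c ≠ 0) (aseq : ℕ → ℝ)
    (hrec : ∀ n : ℕ, c * aseq (n + 2) + b * aseq (n + 1) + a * aseq n = 0)
    (Pstar : ℕ → Polynomial ℝ)
    (hP : ∀ m : ℕ, Pstar m
      = ∑ n ∈ Finset.range (m + 1), Polynomial.C (aseq n) * Polynomial.X ^ (m - n)) :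
    PowerSeries.mk (fun m => Pstar m)
      * ((PowerSeries.C (R := Polynomial ℝ) (Polynomial.C c)
            + PowerSeries.C (R := Polynomial ℝ) (Polynomial.C b) * PowerSeries.X
            + PowerSeries.C (R := Polynomial ℝ) (Polynomial.C a) * PowerSeries.X ^ 2)
          * (1 - PowerSeries.C (R := Polynomial ℝ) Polynomial.X * PowerSeries.X))
      = PowerSeries.C (R := Polynomial ℝ) (Polynomial.C (c * aseq 0))
        + PowerSeries.C (R := Polynomial ℝ) (Polynomial.C (c * aseq 1 + b * aseq 0))
            * PowerSeries.X :=
  reciprocal_polys_generating_function_general a b c aseq hrec Pstar hP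
end

section
/- Suppose t₁t₂ = −1 with −1 < t₁ < 0 < 1 < t₂, C, D are real with CD ≥ 0 and Ct₁ + D ≠ 0. Then for all sufficiently large m and all sufficiently small ε > 0, for every complex z with |z| = t₂ + ε, one has |z^{m+1}(t₁ − t₂)(C + Dz)| > |t₂^{m+1}(1 − z t₂)(Ct₁ + D) + t₁^{m+1}(z t₁ − 1)(Ct₂ + D)|. -/
/-!
Put `l = -t₁ = 1 / t₂` and `r = t₂ + ε = ‖z‖`. Since `t₁ t₂ = -1`, the right-hand side is
`-(a + l b) z + (l a - b)` with `a = t₂^(m+1) (D t₂ - C)` and `b = t₁^(m+1) (C t₂ + D)`; once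
`|b| ≤ l |a|` (true for large `m`), both coefficients have the sign of `a`, so its norm is at most
`|a| (r + l) + |b| l ε`. On the left, `C D ≥ 0` gives `‖C + D z‖ ≥ |D t₂ - C| - |D| ε`.
At `ε = 0` the leading terms tie (both triangle inequalities are sharp at `z = -t₂`); the tie is
broken by Bernoulli's `t₂ (t₂ + ε)^(m+1) ≥ t₂^(m+1) (t₂ + (m+1) ε)`, a gain linear in `ε` whose
slope grows with `m`, while every loss is `O(ε)` with a slope independent of `m`.
-/

open Filter

lemma abs_add_mul_mul_add_abs_mul_sub_le {a b l r : ℝ} (hl₀ : 0 ≤ l) (hl₁ : l ≤ 1)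
    (hrl : 1 ≤ r * l) (hb : |b| ≤ l * |a|) :
    |a + l * b| * r + |l * a - b| ≤ |a| * (r + l) + |b| * (r * l - 1) := by
  wlog ha : 0 ≤ a generalizing a b
  · have := this (a := -a) (b := -b) (by rwa [abs_neg, abs_neg]) (by linarith)
    rwa [show -a + l * -b = -(a + l * b) by ring, show l * -a - -b = -(l * a - b) by ring,
      abs_neg, abs_neg, abs_neg, abs_neg] at this
  -- `|b| ≤ l * a` forces `a + l * b` and `l * a - b` to be nonnegative.
  obtain ⟨hb₁, hb₂⟩ := abs_le.1 (hb.trans_eq (by rw [abs_of_nonneg ha]))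
  rw [abs_of_nonneg ha, abs_of_nonneg (by nlinarith : 0 ≤ a + l * b),
    abs_of_nonneg (by linarith : 0 ≤ l * a - b)]
  nlinarith [mul_le_mul_of_nonneg_right (le_abs_self b) (sub_nonneg.2 hrl)]

lemma abs_mul_sub_sub_le_norm_add_mul {C D t ε : ℝ} (hCD : 0 ≤ C * D) (hε : 0 ≤ ε) {z : ℂ}
    (hz : ‖z‖ = t + ε) : |D * t - C| - |D| * ε ≤ ‖(C : ℂ) + D * z‖ := by
  have hsign : |D * t - C| = |(|D| * t - |C|)| := by
    rcases mul_nonneg_iff.1 hCD with ⟨hC, hD⟩ | ⟨hC, hD⟩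
    · rw [abs_of_nonneg hC, abs_of_nonneg hD]
    · rw [abs_of_nonpos hC, abs_of_nonpos hD, ← abs_neg]
      ring_nf
  have hnorm := abs_norm_sub_norm_le ((D : ℂ) * z) (-C)
  rw [norm_mul, norm_neg, Complex.norm_real, Complex.norm_real, Real.norm_eq_abs,
    Real.norm_eq_abs, hz, sub_neg_eq_add, add_comm ((D : ℂ) * z)] at hnorm
  have htri := abs_sub_abs_le_abs_sub (|D| * t - |C|) (|D| * (t + ε) - |C|)
  rw [show |D| * t - |C| - (|D| * (t + ε) - |C|) = -(|D| * ε) by ring, abs_neg,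
    abs_of_nonneg (by positivity : 0 ≤ |D| * ε)] at htri
  linarith

lemma pow_mul_add_natCast_mul_le {t ε : ℝ} (ht : 0 ≤ t) (hε : 0 ≤ ε) (n : ℕ) :
    t ^ n * (t + n * ε) ≤ t * (t + ε) ^ n := by
  induction n with
  | zero => simp
  | succ n ih =>
    have hpow : t ^ (n + 1) ≤ t ^ n * (t + n * ε) := by
      rw [pow_succ]; gcongr; exact le_add_of_nonneg_right (by positivity)
    calc t ^ (n + 1) * (t + (n + 1 : ℕ) * ε)
        = t * (t ^ n * (t + n * ε)) + ε * t ^ (n + 1) := by push_cast; ring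
      _ ≤ (t + ε) * (t ^ n * (t + n * ε)) := by nlinarith
      _ ≤ (t + ε) * (t * (t + ε) ^ n) := by gcongr
      _ = t * (t + ε) ^ (n + 1) := by ring

lemma pow_mul_add_lt_add_pow_mul {t ε P c : ℝ} {n : ℕ} (ht : 0 < t) (hε : 0 < ε) (hP : 0 ≤ P)
    (hn : t * c < n * P) : t ^ n * (P + c * ε) < (t + ε) ^ n * P := by
  refine lt_of_mul_lt_mul_left ?_ ht.le
  calc t * (t ^ n * (P + c * ε)) = t ^ n * (t * P + t * c * ε) := by ring
    _ < t ^ n * (t * P + n * P * ε) := by gcongr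
    _ = P * (t ^ n * (t + n * ε)) := by ring
    _ ≤ P * (t * (t + ε) ^ n) :=
        mul_le_mul_of_nonneg_left (pow_mul_add_natCast_mul_le ht.le hε.le n) hP
    _ = t * ((t + ε) ^ n * P) := by ring

lemma pow_mul_add_pow_mul_lt {t l g d n ε K : ℝ} {μ : ℕ} (ht : 1 ≤ t) (hl₀ : 0 ≤ l) (hl₁ : l ≤ 1)
    (hd : 0 ≤ d) (hn : 0 ≤ n) (hε : 0 < ε) (hεd : 2 * d * ε ≤ g)
    (hμ : 2 * t * ((t + l) * d + g + n) < μ * ((t + l) * g)) (hK : g - d * ε ≤ K) :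
    t ^ μ * g * (t + ε + l) + l ^ μ * n * (l * ε) < (t + ε) ^ μ * (t + l) * K := by
  have hlt : l ^ μ * l ≤ t ^ μ := calc
    l ^ μ * l ≤ 1 := mul_le_one₀ (pow_le_one₀ hl₀ hl₁) hl₀ hl₁
    _ ≤ t ^ μ := one_le_pow₀ ht
  have hdε : d * ε ≤ g - d * ε := by linarith
  have hP : (t + l) * g ≤ 2 * ((t + l) * (g - d * ε)) := by nlinarith
  calc t ^ μ * g * (t + ε + l) + l ^ μ * n * (l * ε)
      ≤ t ^ μ * ((t + l) * (g - d * ε) + ((t + l) * d + g + n) * ε) := by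
        nlinarith [mul_le_mul_of_nonneg_right hlt (mul_nonneg hn hε.le)]
    _ < (t + ε) ^ μ * ((t + l) * (g - d * ε)) :=
        pow_mul_add_lt_add_pow_mul (by linarith) hε
          (mul_nonneg (by linarith) ((mul_nonneg hd hε.le).trans hdε)) (by nlinarith)
    _ ≤ (t + ε) ^ μ * (t + l) * K := by
        rw [← mul_assoc]; gcongr

lemma eventually_pow_mul_le {l t n g : ℝ} (hl₀ : 0 ≤ l) (hl₁ : l ≤ 1) (ht : 1 < t) (hn : 0 ≤ n)
    (hg : 0 < g) : ∀ᶠ m : ℕ in atTop, l ^ (m + 1) * n ≤ l * (t ^ (m + 1) * g) := by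
  filter_upwards [(tendsto_pow_atTop_atTop_of_one_lt ht).eventually_ge_atTop (n / g)] with m hm
  calc l ^ (m + 1) * n = l * (l ^ m * n) := by ring
    _ ≤ l * n := by gcongr; exact mul_le_of_le_one_left hn (pow_le_one₀ hl₀ hl₁)
    _ ≤ l * (t ^ m * g) := by gcongr; exact (div_le_iff₀ hg).1 hm
    _ ≤ l * (t ^ (m + 1) * g) := by gcongr; exacts [ht.le, m.le_succ]

lemma norm_rouche_perturbation_le {s t C D ε : ℝ} {μ : ℕ} {z : ℂ} (hst : s * t = -1)
    (hs₁ : -1 ≤ s) (hs₀ : s ≤ 0) (ht : 0 ≤ t) (hε : 0 ≤ ε) (hz : ‖z‖ = t + ε)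
    (hdom : (-s) ^ μ * |C * t + D| ≤ -s * (t ^ μ * |D * t - C|)) :
    ‖(t : ℂ) ^ μ * (1 - z * t) * ((C : ℂ) * s + D) + (s : ℂ) ^ μ * (z * s - 1) * ((C : ℂ) * t + D)‖
      ≤ t ^ μ * |D * t - C| * (t + ε + -s) + (-s) ^ μ * |C * t + D| * (-s * ε) := by
  set a := t ^ μ * (D * t - C)
  set b := s ^ μ * (C * t + D)
  have hc : (s : ℂ) * t = -1 := by exact_mod_cast hst
  have hlin : (t : ℂ) ^ μ * (1 - z * t) * ((C : ℂ) * s + D)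
        + (s : ℂ) ^ μ * (z * s - 1) * ((C : ℂ) * t + D)
      = ((-(a + -s * b) : ℝ) : ℂ) * z + ((-s * a - b : ℝ) : ℂ) := by
    simp only [a, b]
    push_cast
    linear_combination ((t : ℂ) ^ μ * (D - C * z)) * hc
  have ha : |a| = t ^ μ * |D * t - C| := by rw [abs_mul, abs_pow, abs_of_nonneg ht]
  have hb : |b| = (-s) ^ μ * |C * t + D| := by rw [abs_mul, abs_pow, abs_of_nonpos hs₀]
  calc _ ≤ |a + -s * b| * (t + ε) + |-s * a - b| := by
        rw [hlin]
        refine (norm_add_le _ _).trans_eq ?_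
        rw [norm_mul, Complex.norm_real, Complex.norm_real, Real.norm_eq_abs, Real.norm_eq_abs,
          abs_neg, hz]
    _ ≤ |a| * (t + ε + -s) + |b| * ((t + ε) * -s - 1) :=
        abs_add_mul_mul_add_abs_mul_sub_le (by linarith) (by linarith) (by nlinarith)
          (by rwa [ha, hb])
    _ = _ := by
        rw [ha, hb]
        linear_combination -((-s) ^ μ * |C * t + D|) * hst

theorem rouche_ineq_ac_neg
    (t₁ t₂ C D : ℝ) (hprod : t₁ * t₂ = -1)
    (h1 : -1 < t₁) (h2 : t₁ < 0) (h3 : 1 < t₂)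
    (hCD : C * D ≥ 0) (hCt1D : C * t₁ + D ≠ 0) :
    ∃ M : ℕ, ∃ ε₀ > (0 : ℝ), ∀ m ≥ M, ∀ ε : ℝ, 0 < ε → ε < ε₀ →
      ∀ z : ℂ, ‖z‖ = t₂ + ε →
        ‖z ^ (m + 1) * ((t₁ : ℂ) - t₂) * ((C : ℂ) + D * z)‖
          > ‖(t₂ : ℂ) ^ (m + 1) * (1 - z * t₂) * ((C : ℂ) * t₁ + D)
              + (t₁ : ℂ) ^ (m + 1) * (z * t₁ - 1) * ((C : ℂ) * t₂ + D)‖ := by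
  have hg : 0 < |D * t₂ - C| := abs_pos.2 <| by
    rw [show D * t₂ - C = t₂ * (C * t₁ + D) by linear_combination -C * hprod]
    exact mul_ne_zero (by linarith) hCt1D
  have hslope : 0 < (t₂ + -t₁) * |D * t₂ - C| := mul_pos (by linarith) hg
  have hlarge := ((tendsto_natCast_atTop_atTop.comp (tendsto_add_atTop_nat 1)).atTop_mul_const
    hslope).eventually_gt_atTop (2 * t₂ * ((t₂ + -t₁) * |D| + |D * t₂ - C| + |C * t₂ + D|))
  obtain ⟨M, hM⟩ := eventually_atTop.1 <| (eventually_pow_mul_le (l := -t₁) (by linarith)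
    (by linarith) h3 (abs_nonneg (C * t₂ + D)) hg).and hlarge
  refine ⟨M, |D * t₂ - C| / (2 * |D| + 1), by positivity, fun m hm ε hε hεlt z hz => ?_⟩
  obtain ⟨hdom, hμ⟩ := hM m hm
  have hεD : 2 * |D| * ε ≤ |D * t₂ - C| := by
    rw [lt_div_iff₀ (by positivity)] at hεlt
    nlinarith
  have hlhs : ‖z ^ (m + 1) * ((t₁ : ℂ) - t₂) * ((C : ℂ) + D * z)‖
      = (t₂ + ε) ^ (m + 1) * (t₂ + -t₁) * ‖(C : ℂ) + D * z‖ := by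
    rw [norm_mul, norm_mul, norm_pow, hz, ← Complex.ofReal_sub, Complex.norm_real,
      Real.norm_eq_abs, abs_of_neg (by linarith : t₁ - t₂ < 0)]
    ring
  rw [gt_iff_lt, hlhs]
  exact (norm_rouche_perturbation_le hprod h1.le h2.le (by linarith) hε.le hz hdom).trans_lt
    (pow_mul_add_pow_mul_lt h3.le (by linarith) (by linarith) (abs_nonneg _) (abs_nonneg _) hε hεD
      hμ (abs_mul_sub_sub_le_norm_add_mul hCD hε.le hz))
end

section
/- Suppose t₁t₂ = 1 with 0 < t₁ < 1 < t₂ and C, D real with CD ≥ 0 and (C,D) ≠ (0,0). Then for all sufficiently large m and sufficiently small ε > 0, for every complex z with |z| = t₂ − ε, one has |z^{m+1}(t₁ − t₂)(C + Dz)| < |t₂^{m+1}(1 − z t₂)(Ct₁ + D) + t₁^{m+1}(z t₁ − 1)(Ct₂ + D)|. -/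
/-!
On the circle `‖z‖ = ρ`, `ρ = t₂ - ε`, both sides are, up to the factor `ρ ^ (m + 1)`, moduli of
real-affine functions of `z`, and the square of such a modulus is affine in `z.re`; so it suffices
to compare them at `z = ± ρ`. After reducing to `C, D ≥ 0`, put `a = t₂ ^ (m + 1) * (C * t₁ + D)`
and `b = t₁ ^ (m + 1) * (C * t₂ + D)`, so that `b ≤ a`. At both points the right-hand side is at
least `a * (ρ * t₂ - 1)` and the left-hand side at most `ρ ^ (m + 1) * (t₂ ^ 2 - 1) * (C * t₁ + D)`.
What remains, `ρ ^ (m + 1) * (t₂ ^ 2 - 1) < t₂ ^ (m + 1) * (ρ * t₂ - 1)` for small `ε` and large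
`m`, follows from Bernoulli's inequality in the form `(1 + n δ) (1 - δ) ^ n ≤ 1`.
-/

lemma one_add_mul_mul_one_sub_pow_le_one {δ : ℝ} (h₀ : 0 ≤ δ) (h₁ : δ ≤ 1) (n : ℕ) :
    (1 + n * δ) * (1 - δ) ^ n ≤ 1 :=
  calc (1 + n * δ) * (1 - δ) ^ n ≤ (1 + δ) ^ n * (1 - δ) ^ n := by
        gcongr
        exact one_add_mul_le_pow (by linarith) n
    _ = (1 - δ ^ 2) ^ n := by rw [← mul_pow]; ring
    _ ≤ 1 := pow_le_one₀ (by nlinarith) (by nlinarith)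

lemma pow_sub_mul_sq_sub_one_lt {t ε : ℝ} {n : ℕ} (ht : 1 < t) (hε : 0 < ε)
    (hεt : 2 * ε * t < t ^ 2 - 1) (hn : 2 * t ^ 2 ≤ n * (t ^ 2 - 1)) :
    (t - ε) ^ n * (t ^ 2 - 1) < t ^ n * ((t - ε) * t - 1) := by
  have ht₀ : 0 < t := by linarith
  set δ := ε / t with hδ
  have hδ₀ : 0 < δ := by positivity
  have hδ₁ : δ < 1 := by rw [hδ, div_lt_one ht₀]; nlinarith
  have hsub : t - ε = t * (1 - δ) := by rw [hδ]; field_simp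
  have hnpos : (0 : ℝ) < n := by nlinarith
  have hX : (t ^ 2 - 1) / 2 < (t - ε) * t - 1 := by linarith
  have hgap : t ^ 2 - 1 < (1 + n * δ) * ((t - ε) * t - 1) := by
    have hexpand : (1 + n * δ) * ((t - ε) * t - 1) - (t ^ 2 - 1)
        = δ * (n * ((t - ε) * t - 1) - t ^ 2) := by
      rw [hδ]; field_simp; ring
    have hlarge : t ^ 2 < n * ((t - ε) * t - 1) := by
      nlinarith [mul_lt_mul_of_pos_left hX hnpos]
    nlinarith [mul_pos hδ₀ (sub_pos.2 hlarge)]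
  have hpow : 0 < (1 - δ) ^ n := pow_pos (by linarith) n
  have key : (1 - δ) ^ n * (t ^ 2 - 1) < (t - ε) * t - 1 := by
    have hbound := mul_le_mul_of_nonneg_right
      (one_add_mul_mul_one_sub_pow_le_one hδ₀.le hδ₁.le n) (by nlinarith : 0 ≤ (t - ε) * t - 1)
    nlinarith [mul_lt_mul_of_pos_left hgap hpow]
  rw [hsub, mul_pow, mul_assoc, ← hsub]
  exact mul_lt_mul_of_pos_left key (pow_pos ht₀ n)

lemma pow_succ_mul_le_pow_succ_mul {t₁ t₂ C D : ℝ} (hprod : t₁ * t₂ = 1) (h₁ : 0 < t₁)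
    (h₁₂ : t₁ ≤ t₂) (hC : 0 ≤ C) (hD : 0 ≤ D) (k : ℕ) :
    t₁ ^ (k + 1) * (C * t₂ + D) ≤ t₂ ^ (k + 1) * (C * t₁ + D) := by
  have h₁' : t₁ ^ (k + 1) * (C * t₂ + D) = C * t₁ ^ k + D * t₁ ^ (k + 1) := by
    linear_combination C * t₁ ^ k * hprod
  have h₂' : t₂ ^ (k + 1) * (C * t₁ + D) = C * t₂ ^ k + D * t₂ ^ (k + 1) := by
    linear_combination C * t₂ ^ k * hprod
  rw [h₁', h₂']
  gcongr

lemma Complex.sq_norm_ofReal_mul_add (p q : ℝ) (z : ℂ) :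
    ‖(p : ℂ) * z + q‖ ^ 2 = p ^ 2 * ‖z‖ ^ 2 + 2 * p * q * z.re + q ^ 2 := by
  simp only [Complex.sq_norm, Complex.normSq_apply, Complex.add_re, Complex.add_im,
    Complex.mul_re, Complex.mul_im, Complex.ofReal_re, Complex.ofReal_im]
  ring

lemma Complex.norm_ofReal_mul_add_lt {p q r s ρ : ℝ} {z : ℂ} (hz : ‖z‖ = ρ)
    (hplus : |r * ρ + s| < |p * ρ + q|) (hminus : |r * ρ - s| < |p * ρ - q|) :
    ‖(r : ℂ) * z + s‖ < ‖(p : ℂ) * z + q‖ := by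
  rw [← sq_lt_sq₀ (norm_nonneg _) (norm_nonneg _), sq_norm_ofReal_mul_add,
    sq_norm_ofReal_mul_add, hz]
  rw [← sq_lt_sq] at hplus hminus
  have hre := abs_le.1 (hz ▸ Complex.abs_re_le_norm z)
  rcases le_total 0 (p * q - r * s) with hB | hB
  · nlinarith [mul_nonneg hB (by linarith : 0 ≤ z.re + ρ)]
  · nlinarith [mul_nonneg (neg_nonneg.2 hB) (by linarith : 0 ≤ ρ - z.re)]

lemma mul_add_pos_of_nonneg {t C D : ℝ} (ht : 0 < t) (hC : 0 ≤ C) (hD : 0 ≤ D)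
    (hCD0 : (C, D) ≠ (0, 0)) : 0 < C * t + D := by
  rcases hC.eq_or_lt with rfl | hC
  · simpa [hD.lt_iff_ne, eq_comm] using hCD0
  · positivity

lemma rouche_ineq_of_nonneg {t₁ t₂ C D ε : ℝ} {m : ℕ} {z : ℂ} (hprod : t₁ * t₂ = 1)
    (h₁ : 0 < t₁) (h₁₂ : t₁ < t₂) (h₂ : 1 < t₂) (hC : 0 ≤ C) (hD : 0 ≤ D)
    (hK : 0 < C * t₁ + D) (hε : 0 < ε) (hεt : 2 * ε * t₂ < t₂ ^ 2 - 1)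
    (hm : 2 * t₂ ^ 2 ≤ (m + 1 : ℕ) * (t₂ ^ 2 - 1)) (hz : ‖z‖ = t₂ - ε) :
    ‖z ^ (m + 1) * ((t₁ : ℂ) - t₂) * ((C : ℂ) + D * z)‖
      < ‖(t₂ : ℂ) ^ (m + 1) * (1 - z * t₂) * ((C : ℂ) * t₁ + D)
          + (t₁ : ℂ) ^ (m + 1) * (z * t₁ - 1) * ((C : ℂ) * t₂ + D)‖ := by
  set ρ := t₂ - ε with hρ
  have hρ₀ : 0 < ρ := by nlinarith
  have hρt₁ : ρ * t₁ ≤ 1 := by nlinarith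
  set a := t₂ ^ (m + 1) * (C * t₁ + D)
  set b := t₁ ^ (m + 1) * (C * t₂ + D)
  set c := ρ ^ (m + 1) * (t₂ - t₁)
  have hb : 0 ≤ b := by positivity
  have hc : 0 ≤ c := mul_nonneg (by positivity) (by linarith)
  have hba : b ≤ a := pow_succ_mul_le_pow_succ_mul hprod h₁ h₁₂.le hC hD m
  have hcore : c * (C + D * ρ) < a * (ρ * t₂ - 1) := by
    have hlin : (t₂ - t₁) * (C + D * ρ) ≤ (t₂ ^ 2 - 1) * (C * t₁ + D) := by
      have : (t₂ ^ 2 - 1) * (C * t₁ + D) = (t₂ - t₁) * (C + D * t₂) := by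
        linear_combination (C * t₂ + D) * hprod
      rw [this]
      gcongr
      linarith
    calc c * (C + D * ρ) = ρ ^ (m + 1) * ((t₂ - t₁) * (C + D * ρ)) := by ring
      _ ≤ ρ ^ (m + 1) * ((t₂ ^ 2 - 1) * (C * t₁ + D)) := by gcongr
      _ = ρ ^ (m + 1) * (t₂ ^ 2 - 1) * (C * t₁ + D) := by ring
      _ < t₂ ^ (m + 1) * (ρ * t₂ - 1) * (C * t₁ + D) :=
        mul_lt_mul_of_pos_right (pow_sub_mul_sq_sub_one_lt h₂ hε hεt hm) hK
      _ = a * (ρ * t₂ - 1) := by ring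
  have hlhs : ‖z ^ (m + 1) * ((t₁ : ℂ) - t₂) * ((C : ℂ) + D * z)‖
      = ‖((c * D : ℝ) : ℂ) * z + ((c * C : ℝ) : ℂ)‖ := by
    have : ((c * D : ℝ) : ℂ) * z + ((c * C : ℝ) : ℂ) = (c : ℂ) * (C + D * z) := by
      push_cast; ring
    rw [this, norm_mul, norm_mul, norm_mul, norm_pow, hz, Complex.norm_real,
      Real.norm_of_nonneg hc, ← Complex.ofReal_sub, Complex.norm_real, Real.norm_eq_abs,
      abs_sub_comm, abs_of_pos (by linarith)]
  have hrhs : (t₂ : ℂ) ^ (m + 1) * (1 - z * t₂) * ((C : ℂ) * t₁ + D)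
        + (t₁ : ℂ) ^ (m + 1) * (z * t₁ - 1) * ((C : ℂ) * t₂ + D)
      = ((b * t₁ - a * t₂ : ℝ) : ℂ) * z + ((a - b : ℝ) : ℂ) := by
    simp only [a, b]; push_cast; ring
  rw [hlhs, hrhs]
  apply Complex.norm_ofReal_mul_add_lt hz
  · calc |c * D * ρ + c * C| = c * (C + D * ρ) := by
          rw [abs_of_nonneg (by positivity)]; ring
      _ < a * (ρ * t₂ - 1) := hcore
      _ ≤ -((b * t₁ - a * t₂) * ρ + (a - b)) := by nlinarith
      _ ≤ _ := neg_le_abs _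
  · calc |c * D * ρ - c * C| ≤ c * (C + D * ρ) := by
          have := mul_nonneg hc hC
          have := mul_nonneg (mul_nonneg hc hD) hρ₀.le
          exact abs_le.2 ⟨by linarith, by linarith⟩
      _ < a * (ρ * t₂ - 1) := hcore
      _ ≤ -((b * t₁ - a * t₂) * ρ - (a - b)) := by nlinarith
      _ ≤ _ := neg_le_abs _

lemma rouche_ineq_of_mul_nonneg {t₁ t₂ C D ε : ℝ} {m : ℕ} {z : ℂ} (hprod : t₁ * t₂ = 1)
    (h₁ : 0 < t₁) (h₁₂ : t₁ < t₂) (h₂ : 1 < t₂) (hCD : 0 ≤ C * D) (hCD0 : (C, D) ≠ (0, 0))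
    (hε : 0 < ε) (hεt : 2 * ε * t₂ < t₂ ^ 2 - 1)
    (hm : 2 * t₂ ^ 2 ≤ (m + 1 : ℕ) * (t₂ ^ 2 - 1)) (hz : ‖z‖ = t₂ - ε) :
    ‖z ^ (m + 1) * ((t₁ : ℂ) - t₂) * ((C : ℂ) + D * z)‖
      < ‖(t₂ : ℂ) ^ (m + 1) * (1 - z * t₂) * ((C : ℂ) * t₁ + D)
          + (t₁ : ℂ) ^ (m + 1) * (z * t₁ - 1) * ((C : ℂ) * t₂ + D)‖ := by
  rcases mul_nonneg_iff.1 hCD with ⟨hC, hD⟩ | ⟨hC, hD⟩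
  · exact rouche_ineq_of_nonneg hprod h₁ h₁₂ h₂ hC hD (mul_add_pos_of_nonneg h₁ hC hD hCD0)
      hε hεt hm hz
  · -- both sides are linear in `(C, D)`
    have hneg := rouche_ineq_of_nonneg (C := -C) (D := -D) hprod h₁ h₁₂ h₂ (by linarith)
      (by linarith) (mul_add_pos_of_nonneg h₁ (by linarith) (by linarith) (by simpa using hCD0))
      hε hεt hm hz
    convert hneg using 1 <;> rw [← norm_neg] <;> push_cast <;> ring_nf

theorem rouche_ineq_ac_pos_CD_nonneg
    (t₁ t₂ C D : ℝ) (hprod : t₁ * t₂ = 1)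
    (h1 : 0 < t₁) (h2 : t₁ < 1) (h3 : 1 < t₂)
    (hCD : C * D ≥ 0) (hCD0 : (C, D) ≠ (0, 0)) :
    ∃ M : ℕ, ∃ ε₀ > (0 : ℝ), ∀ m ≥ M, ∀ ε : ℝ, 0 < ε → ε < ε₀ →
      ∀ z : ℂ, ‖z‖ = t₂ - ε →
        ‖z ^ (m + 1) * ((t₁ : ℂ) - t₂) * ((C : ℂ) + D * z)‖
          < ‖(t₂ : ℂ) ^ (m + 1) * (1 - z * t₂) * ((C : ℂ) * t₁ + D)
              + (t₁ : ℂ) ^ (m + 1) * (z * t₁ - 1) * ((C : ℂ) * t₂ + D)‖ := by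
  have h₁₂ : t₁ < t₂ := h2.trans h3
  have hsq : 0 < t₂ ^ 2 - 1 := by nlinarith
  obtain ⟨M, hM⟩ := exists_nat_ge (2 * t₂ ^ 2 / (t₂ ^ 2 - 1))
  refine ⟨M, (t₂ - t₁) / 2, by linarith, fun m hm ε hε hεlt z hz => ?_⟩
  refine rouche_ineq_of_mul_nonneg hprod h1 h₁₂ h3 hCD hCD0 hε (by nlinarith) ?_ hz
  rw [div_le_iff₀ hsq] at hM
  have : (M : ℝ) ≤ m := by exact_mod_cast hm
  push_cast
  nlinarith
end

section
/- Suppose t₁t₂ = 1 with 0 < t₁ < 1 < t₂, and C < 0 < D with D + C·t₂ > 0. Then for all sufficiently large m and sufficiently small ε > 0, for every complex z with |z| = t₂ − ε, one has |z^{m+1}(t₁ − t₂)(C + Dz)| < |t₂^{m+1}(1 − z t₂)(Ct₁ + D) + t₁^{m+1}(z t₁ − 1)(Ct₂ + D)|. -/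
/-!
Both sides are moduli of functions with real coefficients. The left side is
`(t₂ - t₁) D ‖z‖^(m+1) ‖z - a‖` with `a = -C/D`, and the right side is `A - Q z = Q (b - z)` with
`A = rhsCoeff (m+1)`, `Q = rhsCoeff (m+2)` and `b = A/Q`; moreover `0 < a ≤ b < t₁ < ‖z‖`.
On a circle `‖z‖ = r` with `-r < a ≤ b < r` the ratio `‖z - a‖ / ‖z - b‖` is largest at `z = r`,
so it suffices to prove the inequality at the real point `z = r = t₂ - ε`. There it follows from
`D r + C < t₂ (C t₁ + D)` and the Bernoulli-type bound `r^(m+1) (t₂ - t₁) ≤ t₂^(m+1) (r - t₁)`,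
which holds as soon as `m (r - t₁) ≥ t₁`.
-/

theorem pow_succ_add_mul_le_pow_succ {R : Type*} [CommRing R] [LinearOrder R] [IsStrictOrderedRing R]
    {r t : R} (hr : 0 ≤ r) (hrt : r ≤ t) (n : ℕ) :
    r ^ (n + 1) + (n + 1) * r ^ n * (t - r) ≤ t ^ (n + 1) := by
  induction n with
  | zero => simp
  | succ n ih =>
    have hc : 0 ≤ (n + 1 : R) * r ^ n * (t - r) := by
      have := sub_nonneg.2 hrt
      positivity
    calc r ^ (n + 1 + 1) + ((n + 1 : ℕ) + 1 : R) * r ^ (n + 1) * (t - r)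
        = r ^ (n + 1) * t + (n + 1) * r ^ n * (t - r) * r := by push_cast; ring
      _ ≤ r ^ (n + 1) * t + (n + 1) * r ^ n * (t - r) * t := by gcongr
      _ = (r ^ (n + 1) + (n + 1) * r ^ n * (t - r)) * t := by ring
      _ ≤ t ^ (n + 1) * t := mul_le_mul_of_nonneg_right ih (hr.trans hrt)
      _ = t ^ (n + 1 + 1) := (pow_succ t (n + 1)).symm

theorem Complex.norm_sub_ofReal_sq (z : ℂ) (a : ℝ) :
    ‖z - a‖ ^ 2 = ‖z‖ ^ 2 - 2 * a * z.re + a ^ 2 := by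
  rw [Complex.sq_norm, Complex.sq_norm, Complex.normSq_apply, Complex.normSq_apply]
  simp only [Complex.sub_re, Complex.ofReal_re, Complex.sub_im, Complex.ofReal_im, sub_zero]
  ring

theorem Complex.mul_norm_sub_ofReal_le {z : ℂ} {r a b : ℝ} (hz : ‖z‖ = r)
    (ha : -r ≤ a) (hab : a ≤ b) (hb : b ≤ r) :
    (r - b) * ‖z - a‖ ≤ (r - a) * ‖z - b‖ := by
  have hre : z.re ≤ r := hz ▸ Complex.re_le_norm z
  have hsq : ((r - b) * ‖z - a‖) ^ 2 ≤ ((r - a) * ‖z - b‖) ^ 2 := by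
    have hrab : 0 ≤ r ^ 2 - a * b := by nlinarith
    rw [mul_pow, mul_pow, Complex.norm_sub_ofReal_sq, Complex.norm_sub_ofReal_sq, hz]
    nlinarith [mul_nonneg (mul_nonneg (sub_nonneg.2 hre) (sub_nonneg.2 hab)) hrab]
  exact le_of_sq_le_sq hsq (mul_nonneg (by linarith) (norm_nonneg _))

theorem Complex.mul_norm_sub_ofReal_lt {z : ℂ} {r a b c d : ℝ} (hz : ‖z‖ = r)
    (ha : -r < a) (hab : a ≤ b) (hb : b < r) (hc : 0 ≤ c)
    (h : c * (r - a) < d * (r - b)) :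
    c * ‖z - a‖ < d * ‖z - b‖ := by
  have hzb : 0 < ‖z - b‖ := by
    have := norm_sub_norm_le z (b : ℂ)
    rw [hz, Complex.norm_real, Real.norm_eq_abs] at this
    linarith [abs_lt.2 ⟨ha.trans_le hab, hb⟩]
  have hrb : 0 < r - b := sub_pos.2 hb
  refine lt_of_mul_lt_mul_left ?_ hrb.le
  calc (r - b) * (c * ‖z - a‖) = c * ((r - b) * ‖z - a‖) := by ring
    _ ≤ c * ((r - a) * ‖z - b‖) :=
        mul_le_mul_of_nonneg_left (mul_norm_sub_ofReal_le hz ha.le hab hb.le) hc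
    _ = c * (r - a) * ‖z - b‖ := by ring
    _ < d * (r - b) * ‖z - b‖ := mul_lt_mul_of_pos_right h hzb
    _ = (r - b) * (d * ‖z - b‖) := by ring

theorem pow_succ_mul_sub_le_of_le_mul_sub {R : Type*} [CommRing R] [LinearOrder R]
    [IsStrictOrderedRing R] {t₁ r t₂ : R} (hr : 0 ≤ r) (hrt₂ : r ≤ t₂) {n : ℕ}
    (hn : r ≤ (n + 1) * (r - t₁)) :
    r ^ (n + 1) * (t₂ - t₁) ≤ t₂ ^ (n + 1) * (r - t₁) := by
  have hrt₁ : 0 ≤ r - t₁ := by nlinarith [(Nat.cast_nonneg n : (0 : R) ≤ n)]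
  have hrn : 0 ≤ r ^ n * (t₂ - r) := mul_nonneg (pow_nonneg hr n) (sub_nonneg.2 hrt₂)
  calc r ^ (n + 1) * (t₂ - t₁) = r ^ (n + 1) * (r - t₁) + r ^ n * (t₂ - r) * r := by ring
    _ ≤ r ^ (n + 1) * (r - t₁) + r ^ n * (t₂ - r) * ((n + 1) * (r - t₁)) := by gcongr
    _ = (r ^ (n + 1) + (n + 1) * r ^ n * (t₂ - r)) * (r - t₁) := by ring
    _ ≤ t₂ ^ (n + 1) * (r - t₁) :=
        mul_le_mul_of_nonneg_right (pow_succ_add_mul_le_pow_succ hr hrt₂ n) hrt₁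

noncomputable def rhsCoeff (t₁ t₂ C D : ℝ) (n : ℕ) : ℝ :=
  t₂ ^ n * (C * t₁ + D) - t₁ ^ n * (C * t₂ + D)

section rhsCoeff

variable {t₁ t₂ C D : ℝ}

theorem rhs_eq_rhsCoeff (n : ℕ) (z : ℂ) :
    (t₂ : ℂ) ^ n * (1 - z * t₂) * ((C : ℂ) * t₁ + D) + (t₁ : ℂ) ^ n * (z * t₁ - 1) * ((C : ℂ) * t₂ + D)
      = rhsCoeff t₁ t₂ C D n - rhsCoeff t₁ t₂ C D (n + 1) * z := by
  simp only [rhsCoeff]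
  push_cast
  ring

theorem rhsCoeff_pos (h1 : 0 < t₁) (h12 : t₁ < t₂) (hC : C < 0) (hP₁ : 0 < C * t₂ + D)
    (n : ℕ) : 0 < rhsCoeff t₁ t₂ C D n := by
  have hP : C * t₂ + D < C * t₁ + D := by nlinarith
  have hpow : t₁ ^ n ≤ t₂ ^ n := pow_le_pow_left₀ h1.le h12.le n
  have := mul_lt_mul_of_pos_left hP (pow_pos h1 n)
  have := mul_le_mul_of_nonneg_right hpow (hP₁.trans hP).le
  simp only [rhsCoeff]
  linarith

theorem neg_div_le_rhsCoeff_div (h1 : 0 ≤ t₁) (h12 : t₁ ≤ t₂) (hD : 0 < D)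
    (hP₁ : 0 ≤ C * t₂ + D) (hP₂ : 0 ≤ C * t₁ + D) {n : ℕ} (hpos : 0 < rhsCoeff t₁ t₂ C D (n + 1)) :
    -C / D ≤ rhsCoeff t₁ t₂ C D n / rhsCoeff t₁ t₂ C D (n + 1) := by
  have hident : D * rhsCoeff t₁ t₂ C D n + C * rhsCoeff t₁ t₂ C D (n + 1)
      = (C * t₂ + D) * (C * t₁ + D) * (t₂ ^ n - t₁ ^ n) := by
    simp only [rhsCoeff]; ring
  have := mul_nonneg (mul_nonneg hP₁ hP₂) (sub_nonneg.2 (pow_le_pow_left₀ h1 h12 n))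
  rw [div_le_div_iff₀ hD hpos]
  linarith

theorem rhsCoeff_div_lt (hprod : t₁ * t₂ = 1) (h1 : 0 < t₁) (h2 : t₁ < 1)
    (hP₁ : 0 < C * t₂ + D) {n : ℕ} (hpos : 0 < rhsCoeff t₁ t₂ C D (n + 1)) :
    rhsCoeff t₁ t₂ C D n / rhsCoeff t₁ t₂ C D (n + 1) < t₁ := by
  have hident : t₁ * rhsCoeff t₁ t₂ C D (n + 1) - rhsCoeff t₁ t₂ C D n
      = t₁ ^ n * (C * t₂ + D) * (1 - t₁ ^ 2) := by
    simp only [rhsCoeff]; linear_combination (t₂ ^ n * (C * t₁ + D)) * hprod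
  have := mul_pos (mul_pos (pow_pos h1 n) hP₁) (by nlinarith : 0 < 1 - t₁ ^ 2)
  rw [div_lt_iff₀ hpos]
  linarith

theorem pow_mul_lt_rhsCoeff (hprod : t₁ * t₂ = 1) (h1 : 0 < t₁) {r : ℝ} (ht₁r : t₁ < r)
    (hrt₂ : r < t₂) (hD : 0 < D) (hP₁ : 0 ≤ C * t₂ + D) (hP₂ : 0 ≤ C * t₁ + D) {n : ℕ}
    (hn : r ≤ (n + 1) * (r - t₁)) :
    r ^ (n + 1) * (t₂ - t₁) * (D * r + C)
      < rhsCoeff t₁ t₂ C D (n + 2) * r - rhsCoeff t₁ t₂ C D (n + 1) := by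
  have hident : rhsCoeff t₁ t₂ C D (n + 2) * r - rhsCoeff t₁ t₂ C D (n + 1)
      = t₂ ^ (n + 1) * (r - t₁) * (t₂ * (C * t₁ + D))
        + t₁ ^ (n + 1) * (C * t₂ + D) * (1 - t₁ * r) := by
    simp only [rhsCoeff]; linear_combination (t₂ ^ (n + 1) * (C * t₁ + D)) * hprod
  have hlin : D * r + C < t₂ * (C * t₁ + D) := by
    linear_combination (-C) * hprod + D * hrt₂
  have ht₂P₂ : 0 ≤ t₂ * (C * t₁ + D) := mul_nonneg (h1.trans (ht₁r.trans hrt₂)).le hP₂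
  have hr : 0 < r := h1.trans ht₁r
  have hrest : 0 ≤ t₁ ^ (n + 1) * (C * t₂ + D) * (1 - t₁ * r) := by
    have : t₁ * r ≤ 1 := hprod ▸ mul_le_mul_of_nonneg_left hrt₂.le h1.le
    exact mul_nonneg (mul_nonneg (pow_pos h1 _).le hP₁) (sub_nonneg.2 this)
  calc r ^ (n + 1) * (t₂ - t₁) * (D * r + C)
      < r ^ (n + 1) * (t₂ - t₁) * (t₂ * (C * t₁ + D)) :=
        mul_lt_mul_of_pos_left hlin (mul_pos (pow_pos hr _) (by linarith))
    _ ≤ t₂ ^ (n + 1) * (r - t₁) * (t₂ * (C * t₁ + D)) :=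
        mul_le_mul_of_nonneg_right (pow_succ_mul_sub_le_of_le_mul_sub hr.le hrt₂.le hn) ht₂P₂
    _ ≤ _ := hident ▸ le_add_of_nonneg_right hrest

theorem norm_lhs_eq (h12 : t₁ ≤ t₂) (hD : 0 < D) (n : ℕ) (z : ℂ) :
    ‖z ^ n * ((t₁ : ℂ) - t₂) * ((C : ℂ) + D * z)‖ = ‖z‖ ^ n * (t₂ - t₁) * D * ‖z - ↑(-C / D)‖ := by
  have hD' : (D : ℂ) ≠ 0 := Complex.ofReal_ne_zero.2 hD.ne'
  have : (C : ℂ) + D * z = D * (z - ↑(-C / D)) := by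
    push_cast; field_simp; ring
  rw [this, norm_mul, norm_mul, norm_mul, norm_pow, ← Complex.ofReal_sub, Complex.norm_real,
    Complex.norm_real, Real.norm_of_nonneg hD.le, Real.norm_of_nonpos (by linarith)]
  ring

theorem norm_rhs_eq {n : ℕ} (hpos : 0 < rhsCoeff t₁ t₂ C D (n + 1)) (z : ℂ) :
    ‖(t₂ : ℂ) ^ n * (1 - z * t₂) * ((C : ℂ) * t₁ + D) + (t₁ : ℂ) ^ n * (z * t₁ - 1) * ((C : ℂ) * t₂ + D)‖
      = rhsCoeff t₁ t₂ C D (n + 1)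
        * ‖z - ↑(rhsCoeff t₁ t₂ C D n / rhsCoeff t₁ t₂ C D (n + 1))‖ := by
  have hQ : (rhsCoeff t₁ t₂ C D (n + 1) : ℂ) ≠ 0 := Complex.ofReal_ne_zero.2 hpos.ne'
  have : (rhsCoeff t₁ t₂ C D n : ℂ) - rhsCoeff t₁ t₂ C D (n + 1) * z
      = -(rhsCoeff t₁ t₂ C D (n + 1) * (z - ↑(rhsCoeff t₁ t₂ C D n / rhsCoeff t₁ t₂ C D (n + 1)))) := by
    push_cast; field_simp; ring
  rw [rhs_eq_rhsCoeff, this, norm_neg, norm_mul, Complex.norm_real, Real.norm_of_nonneg hpos.le]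

end rhsCoeff

theorem rouche_ineq_ac_pos_CD_neg
    (t₁ t₂ C D : ℝ) (hprod : t₁ * t₂ = 1)
    (h1 : 0 < t₁) (h2 : t₁ < 1) (h3 : 1 < t₂)
    (hC : C < 0) (hD : 0 < D) (hDC : D + C * t₂ > 0) :
    ∃ M : ℕ, ∃ ε₀ > (0 : ℝ), ∀ m ≥ M, ∀ ε : ℝ, 0 < ε → ε < ε₀ →
      ∀ z : ℂ, ‖z‖ = t₂ - ε →
        ‖z ^ (m + 1) * ((t₁ : ℂ) - t₂) * ((C : ℂ) + D * z)‖
          < ‖(t₂ : ℂ) ^ (m + 1) * (1 - z * t₂) * ((C : ℂ) * t₁ + D)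
              + (t₁ : ℂ) ^ (m + 1) * (z * t₁ - 1) * ((C : ℂ) * t₂ + D)‖ := by
  have h12 : t₁ < t₂ := h2.trans h3
  have hP₁ : 0 < C * t₂ + D := by linarith
  have hP₂ : 0 < C * t₁ + D := by nlinarith
  obtain ⟨M, hM⟩ := exists_nat_ge (2 * t₁ / (t₂ - t₁))
  refine ⟨M, (t₂ - t₁) / 2, by linarith, fun m hm ε hε hεε z hz => ?_⟩
  set r := t₂ - ε with hr
  have ht₁r : t₁ < r := by linarith
  have hrt₂ : r < t₂ := by linarith
  have hmr : r ≤ (m + 1) * (r - t₁) := by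
    have : 2 * t₁ ≤ m * (t₂ - t₁) :=
      (div_le_iff₀ (sub_pos.2 h12)).1 (hM.trans (Nat.cast_le.2 hm))
    nlinarith
  have hQ := rhsCoeff_pos h1 h12 hC hP₁ (m + 2)
  rw [norm_lhs_eq h12.le hD, norm_rhs_eq hQ, hz]
  refine Complex.mul_norm_sub_ofReal_lt hz ?_ (neg_div_le_rhsCoeff_div h1.le h12.le hD hP₁.le hP₂.le hQ)
    ((rhsCoeff_div_lt hprod h1 h2 hP₁ hQ).trans ht₁r)
    (mul_nonneg (mul_nonneg (pow_pos (h1.trans ht₁r) _).le (sub_nonneg.2 h12.le)) hD.le) ?_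
  · linarith [div_pos (neg_pos.2 hC) hD]
  · calc r ^ (m + 1) * (t₂ - t₁) * D * (r - -C / D) = r ^ (m + 1) * (t₂ - t₁) * (D * r + C) := by
          field_simp; ring
      _ < rhsCoeff t₁ t₂ C D (m + 2) * r - rhsCoeff t₁ t₂ C D (m + 1) :=
          pow_mul_lt_rhsCoeff hprod h1 ht₁r hrt₂ hD hP₁.le hP₂.le hmr
      _ = _ := by field_simp
end

section
/- Suppose t₁t₂ = −1 with −1 < t₁ < 0 < 1 < t₂ and C, D real. Then z = −t₂ and z = −t₁ are both roots of the polynomial Q_m(z) = −t₂^{m+1}(1 − z t₂)(Ct₁ + D) − t₁^{m+1}(z t₁ − 1)(Ct₂ + D) + (−1)^{m+1} z^{m+1}(t₁ − t₂)(C + Dz). -/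
theorem neg_t2_neg_t1_roots_of_Qm
    (t₁ t₂ C D : ℝ) (hprod : t₁ * t₂ = -1)
    (h1 : -1 < t₁) (h2 : t₁ < 0) (h3 : 1 < t₂) (m : ℕ) :
    (fun z : ℂ =>
        -(t₂ : ℂ) ^ (m + 1) * (1 - z * t₂) * ((C : ℂ) * t₁ + D)
          - (t₁ : ℂ) ^ (m + 1) * (z * t₁ - 1) * ((C : ℂ) * t₂ + D)
          + (-1 : ℂ) ^ (m + 1) * z ^ (m + 1) * ((t₁ : ℂ) - t₂) * ((C : ℂ) + D * z))
        (-(t₂ : ℂ)) = 0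
    ∧ (fun z : ℂ =>
        -(t₂ : ℂ) ^ (m + 1) * (1 - z * t₂) * ((C : ℂ) * t₁ + D)
          - (t₁ : ℂ) ^ (m + 1) * (z * t₁ - 1) * ((C : ℂ) * t₂ + D)
          + (-1 : ℂ) ^ (m + 1) * z ^ (m + 1) * ((t₁ : ℂ) - t₂) * ((C : ℂ) + D * z))
        (-(t₁ : ℂ)) = 0 := by
  have h : (t₁ : ℂ) * t₂ = -1 := by exact_mod_cast congrArg (Complex.ofReal) hprod
  have e1 : ((-1 : ℂ)) ^ (m + 1) * (-(t₂:ℂ)) ^ (m + 1) = (t₂:ℂ) ^ (m + 1) := by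
    rw [← mul_pow]; ring_nf
  have e2 : ((-1 : ℂ)) ^ (m + 1) * (-(t₁:ℂ)) ^ (m + 1) = (t₁:ℂ) ^ (m + 1) := by
    rw [← mul_pow]; ring_nf
  constructor
  · simp only
    rw [e1]
    linear_combination (((t₁:ℂ)^(m+1) - (t₂:ℂ)^(m+1)) * ((C:ℂ)*t₂ + D)) * h
  · simp only
    rw [e2]
    linear_combination (((t₁:ℂ)^(m+1) - (t₂:ℂ)^(m+1)) * ((C:ℂ)*t₁ + D)) * h
end

section
/- Let a, b, c be real with abc ≠ 0, ac > 0 and b² − 4ac > 0, (a_n) satisfy c·a_{n+2} + b·a_{n+1} + a·a_n = 0 with (a_0, a_1) ≠ (0,0) and a_0·b·(a_1 c + b a_0) ≤ 0, and let α be the root of a t² + b t + c of largest modulus. Then there exists M such that for all m ≥ M, every complex zero z of P_m(z) = ∑_{n=0}^m a_n z^n satisfies |z| ≤ |c|/(|a|·|α|). -/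
/-!
Let `β = t α` be the other root of `a x² + b x + c`, so that `t = c / (a α²) > 0` and
`|β| = |c| / (|a| |α|)`. The sequence `uₙ = aₙ βⁿ` satisfies
`u (n + 2) - u (n + 1) = t (u (n + 1) - u n)`, so all its differences have the sign of `u₁ - u₀`,
and the sign condition on `a₀, a₁` says that `u₀` does not have the opposite sign. Up to a global
sign, `u` is therefore nonnegative and strictly increasing, and the Eneström–Kakeya theorem puts the
zeros of `∑ uₙ wⁿ = Pₘ(β w)` in the closed unit disc.
-/

open Finset

theorem sub_one_mul_sum_range_mul_pow {R : Type*} [CommRing R] (q : ℕ → R) (w : R) (m : ℕ) :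
    (w - 1) * ∑ n ∈ range (m + 1), q n * w ^ n
      = q m * w ^ (m + 1) - q 0 - ∑ n ∈ range m, (q (n + 1) - q n) * w ^ (n + 1) := by
  induction m with
  | zero => simp; ring
  | succ m ih =>
    rw [sum_range_succ, mul_add, ih, sum_range_succ]
    ring

theorem add_sum_range_sub_mul_pow_le {q : ℕ → ℝ} (hq0 : 0 ≤ q 0) (hq : Monotone q) {ρ : ℝ}
    (hρ : 1 ≤ ρ) (m : ℕ) :
    q 0 + ∑ n ∈ range m, (q (n + 1) - q n) * ρ ^ (n + 1) ≤ q m * ρ ^ m := by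
  induction m with
  | zero => simp
  | succ m ih =>
    have hpow : q m * ρ ^ m ≤ q m * ρ ^ (m + 1) :=
      mul_le_mul_of_nonneg_left (pow_le_pow_right₀ hρ m.le_succ) (hq0.trans (hq m.zero_le))
    rw [sum_range_succ, ← add_assoc, sub_mul]
    linarith

/-- The Eneström–Kakeya theorem. -/
theorem norm_le_one_of_sum_mul_pow_eq_zero {q : ℕ → ℝ} (hq0 : 0 ≤ q 0) (hq : Monotone q)
    {m : ℕ} (hm : 0 < q m) {w : ℂ} (hw : ∑ n ∈ range (m + 1), (q n : ℂ) * w ^ n = 0) :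
    ‖w‖ ≤ 1 := by
  by_contra! hw1
  have key : (q m : ℂ) * w ^ (m + 1)
      = q 0 + ∑ n ∈ range m, ((q (n + 1) - q n : ℝ) : ℂ) * w ^ (n + 1) := by
    have h := sub_one_mul_sum_range_mul_pow (fun n => (q n : ℂ)) w m
    rw [hw, mul_zero] at h
    push_cast
    linear_combination -h
  have hle : q m * ‖w‖ ^ (m + 1) ≤ q m * ‖w‖ ^ m := calc
    q m * ‖w‖ ^ (m + 1) = ‖(q m : ℂ) * w ^ (m + 1)‖ := by simp [abs_of_pos hm]
    _ ≤ q 0 + ∑ n ∈ range m, (q (n + 1) - q n) * ‖w‖ ^ (n + 1) := by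
      rw [key]
      refine (norm_add_le _ _).trans (add_le_add ?_ ((norm_sum_le _ _).trans ?_))
      · simp [abs_of_nonneg hq0]
      · refine sum_le_sum fun n _ => ?_
        rw [norm_mul, norm_pow, Complex.norm_real,
          Real.norm_of_nonneg (sub_nonneg.2 (hq n.le_succ))]
    _ ≤ q m * ‖w‖ ^ m := add_sum_range_sub_mul_pow_le hq0 hq hw1.le m
  have hgrow : q m * ‖w‖ ^ m * 1 < q m * ‖w‖ ^ m * ‖w‖ :=
    mul_lt_mul_of_pos_left hw1 (by positivity)
  rw [pow_succ] at hle
  linarith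

theorem strictMono_of_sub_succ_eq_mul {u : ℕ → ℝ} {t : ℝ} (ht : 0 < t)
    (hu : ∀ n, u (n + 2) - u (n + 1) = t * (u (n + 1) - u n)) (h01 : u 0 < u 1) :
    StrictMono u := by
  refine strictMono_nat_of_lt_succ fun n => sub_pos.1 ?_
  induction n with
  | zero => exact sub_pos.2 h01
  | succ n ih => rw [hu]; exact mul_pos ht ih

theorem norm_le_one_of_sum_mul_pow_eq_zero_of_sub_succ_eq_mul {u : ℕ → ℝ} {t : ℝ} (ht : 0 < t)
    (hu : ∀ n, u (n + 2) - u (n + 1) = t * (u (n + 1) - u n)) (h0 : 0 ≤ u 0 * (u 1 - u 0))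
    (hne : u 0 ≠ u 1) {m : ℕ} (hm : 1 ≤ m) {w : ℂ}
    (hw : ∑ n ∈ range (m + 1), (u n : ℂ) * w ^ n = 0) : ‖w‖ ≤ 1 := by
  wlog h01 : u 0 < u 1 generalizing u
  · refine this (u := fun n => -u n) (fun n => by linear_combination -hu n) (by linarith)
      (by simpa using hne) ?_ (neg_lt_neg ((not_lt.1 h01).lt_of_ne hne.symm))
    push_cast
    simp only [neg_mul, sum_neg_distrib, hw, neg_zero]
  have hmono := strictMono_of_sub_succ_eq_mul ht hu h01
  have hu0 : 0 ≤ u 0 := nonneg_of_mul_nonneg_left h0 (sub_pos.2 h01)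
  exact norm_le_one_of_sum_mul_pow_eq_zero hu0 hmono.monotone (hu0.trans_lt (hmono hm)) hw

theorem ne_of_mul_sq_le_mul_sub {t x y : ℝ} (ht : 0 < t) (h : t * x ^ 2 ≤ x * (y - x))
    (hxy : (x, y) ≠ (0, 0)) : x ≠ y := by
  rintro rfl
  have hx : x = 0 := pow_eq_zero_iff two_ne_zero |>.1 <|
    le_antisymm (nonpos_of_mul_nonpos_right (by simpa using h) ht) (sq_nonneg x)
  exact hxy (by rw [hx])

theorem sum_mul_pow_mul_div_pow {K : Type*} [Field K] {β : K} (hβ : β ≠ 0) (f : ℕ → K)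
    (s : Finset ℕ) (z : K) : ∑ n ∈ s, f n * β ^ n * (z / β) ^ n = ∑ n ∈ s, f n * z ^ n :=
  sum_congr rfl fun n _ => by rw [mul_assoc, ← mul_pow, mul_div_cancel₀ _ hβ]

section Quadratic

variable {a b c α t : ℝ}

/-- Vieta's formulas, with the second root of `a x² + b x + c` written as `t α`. -/
theorem exists_pos_eq_vieta (ha : a ≠ 0) (hα : α ≠ 0) (hac : 0 < a * c)
    (hroot : a * α ^ 2 + b * α + c = 0) :
    ∃ t, 0 < t ∧ c = a * t * α ^ 2 ∧ b = -(a * (1 + t) * α) := by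
  have hc : c = a * (c / (a * α ^ 2)) * α ^ 2 := by field_simp
  refine ⟨c / (a * α ^ 2), ?_, hc, mul_right_cancel₀ hα (by linear_combination hroot - hc)⟩
  rw [show c / (a * α ^ 2) = a * c / (a * α) ^ 2 by field_simp]
  positivity

theorem mul_pow_sub_succ_eq_of_recurrence {aseq : ℕ → ℝ} (ha : a ≠ 0) (hα : α ≠ 0) (ht : t ≠ 0)
    (hc : c = a * t * α ^ 2) (hb : b = -(a * (1 + t) * α))
    (hrec : ∀ n, c * aseq (n + 2) + b * aseq (n + 1) + a * aseq n = 0) (n : ℕ) :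
    aseq (n + 2) * (t * α) ^ (n + 2) - aseq (n + 1) * (t * α) ^ (n + 1)
      = t * (aseq (n + 1) * (t * α) ^ (n + 1) - aseq n * (t * α) ^ n) := by
  subst hc hb
  refine mul_left_cancel₀ (by positivity : a * t * α ^ 2 ≠ 0) ?_
  linear_combination (t * α) ^ (n + 2) * hrec n

theorem sq_mul_le_of_sign_condition {a₀ a₁ : ℝ} (ha : a ≠ 0) (hα : α ≠ 0) (ht : 0 < 1 + t)
    (hc : c = a * t * α ^ 2) (hb : b = -(a * (1 + t) * α))
    (hsign : a₀ * b * (a₁ * c + b * a₀) ≤ 0) :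
    t * a₀ ^ 2 ≤ a₀ * (a₁ * (t * α) - a₀) := by
  subst hc hb
  have hpos : 0 < a ^ 2 * α ^ 2 * (1 + t) := by positivity
  have hid : a₀ * -(a * (1 + t) * α) * (a₁ * (a * t * α ^ 2) + -(a * (1 + t) * α) * a₀)
      = a ^ 2 * α ^ 2 * (1 + t) * (t * a₀ ^ 2 - a₀ * (a₁ * (t * α) - a₀)) := by ring
  rw [hid] at hsign
  linarith [nonpos_of_mul_nonpos_right hsign hpos]

end Quadratic

theorem zeros_inside_ball_CD_pos_general
    (a b c : ℝ) (habc : a * b * c ≠ 0) (hac : 0 < a * c)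
    (α : ℝ) (hα : a * α ^ 2 + b * α + c = 0)
    (aseq : ℕ → ℝ)
    (hrec : ∀ n : ℕ, c * aseq (n + 2) + b * aseq (n + 1) + a * aseq n = 0)
    (hinit : (aseq 0, aseq 1) ≠ (0, 0))
    (hsign : aseq 0 * b * (aseq 1 * c + b * aseq 0) ≤ 0) :
    ∃ M : ℕ, ∀ m ≥ M, ∀ z : ℂ,
      (∑ n ∈ Finset.range (m + 1), (aseq n : ℂ) * z ^ n) = 0 →
      ‖z‖ ≤ |c| / (|a| * |α|) := by
  have ha : a ≠ 0 := by rintro rfl; simp at habc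
  have hc0 : c ≠ 0 := by rintro rfl; simp at habc
  have hα0 : α ≠ 0 := by rintro rfl; simp [hc0] at hα
  obtain ⟨t, ht, hc, hb⟩ := exists_pos_eq_vieta ha hα0 hac hα
  have hβ : t * α ≠ 0 := by positivity
  set u : ℕ → ℝ := fun n => aseq n * (t * α) ^ n
  have hu : ∀ n, u (n + 2) - u (n + 1) = t * (u (n + 1) - u n) :=
    mul_pow_sub_succ_eq_of_recurrence ha hα0 ht.ne' hc hb hrec
  have hsq : t * u 0 ^ 2 ≤ u 0 * (u 1 - u 0) := by
    simpa [u] using sq_mul_le_of_sign_condition ha hα0 (by linarith) hc hb hsign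
  have hne : u 0 ≠ u 1 := ne_of_mul_sq_le_mul_sub ht hsq (by simpa [u, hβ] using hinit)
  refine ⟨1, fun m hm z hz => ?_⟩
  have hw : ∑ n ∈ range (m + 1), (u n : ℂ) * (z / (t * α : ℝ)) ^ n = 0 := by
    rw [← hz, ← sum_mul_pow_mul_div_pow (by exact_mod_cast hβ : ((t * α : ℝ) : ℂ) ≠ 0)
      (fun n => (aseq n : ℂ)) _ z]
    simp only [u, Complex.ofReal_mul, Complex.ofReal_pow]
  have hle := norm_le_one_of_sum_mul_pow_eq_zero_of_sub_succ_eq_mul ht hu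
    ((mul_nonneg ht.le (sq_nonneg _)).trans hsq) hne hm hw
  rw [norm_div, Complex.norm_real, div_le_one (norm_pos_iff.2 hβ)] at hle
  calc ‖z‖ ≤ |t * α| := hle
    _ = |c| / (|a| * |α|) := by rw [← abs_mul, ← abs_div, hc]; congr 1; field_simp

theorem zeros_inside_ball_CD_pos
    (a b c : ℝ) (habc : a * b * c ≠ 0) (hac : 0 < a * c) (hdisc : b ^ 2 - 4 * a * c > 0)
    (α : ℝ) (hα : a * α ^ 2 + b * α + c = 0)
    (hαmax : ∀ β : ℝ, a * β ^ 2 + b * β + c = 0 → |β| ≤ |α|)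
    (aseq : ℕ → ℝ)
    (hrec : ∀ n : ℕ, c * aseq (n + 2) + b * aseq (n + 1) + a * aseq n = 0)
    (hinit : (aseq 0, aseq 1) ≠ (0, 0))
    (hsign : aseq 0 * b * (aseq 1 * c + b * aseq 0) ≤ 0) :
    ∃ M : ℕ, ∀ m ≥ M, ∀ z : ℂ,
      (∑ n ∈ Finset.range (m + 1), (aseq n : ℂ) * z ^ n) = 0 →
      ‖z‖ ≤ |c| / (|a| * |α|) :=
  zeros_inside_ball_CD_pos_general a b c habc hac α hα aseq hrec hinit hsign
end
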